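/- arXiv:1909.00974 — 5 statements merged into one kernel-verified Lean document; each statement's English description precedes it below -/
import Mathlib

section
/- Let P be a rational polyhedral cone in R^m with nonempty interior, i.e., P = {x ∈ R^m : A x ≥ 0} for some integer matrix A. Then there exist nonempty finite sets Ω₀ ⊂ int(P) ∩ Z^m and Ω ⊂ P ∩ Z^m such that int(P) ∩ Z^m = { a + Σ_{b∈Ω} k_b·b : a ∈ Ω₀, k_b ∈ Z, k_b ≥ 0 }. -/
/-!
A lattice point `v` of the cone `{x | 0 ≤ A x}` lifts to `(v⁺, v⁻, A v) ∈ ℕ^ι × ℕ^ι × ℕ^κ`, and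
the lifts are the tuples `(p, n, y)` with `A (p - n) = y`. They form a submonoid of a
well-quasi-ordered monoid which is closed under differences: if `s ≤ t` are lifts, so is `t - s`.
Dickson's lemma therefore makes it finitely generated (Gordan's lemma), and covers any set of
lifts by the upward closure of its finitely many minimal elements. Applied to the lifts of the
interior lattice points this gives `Ω₀`; a generating set of the lattice points of the cone
gives `Ω`.
An interior lattice point exists since the interior is an open cone: scale one of its points
far out and round it.
-/

open Matrix

theorem Set.exists_finset_subset_forall_exists_le {α : Type*} [PartialOrder α]
    [WellQuasiOrderedLE α] (s : Set α) :
    ∃ F : Finset α, ↑F ⊆ s ∧ ∀ x ∈ s, ∃ a ∈ F, a ≤ x := by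
  have hfin : {x | Minimal (· ∈ s) x}.Finite :=
    WellQuasiOrderedLE.finite_of_isAntichain (setOfPred_minimal_antichain _)
  refine ⟨hfin.toFinset, fun x hx => (hfin.mem_toFinset.1 hx).prop, fun x hx => ?_⟩
  obtain ⟨a, hax, ha⟩ := exists_minimal_le_of_wellFoundedLT (· ∈ s) x hx
  exact ⟨a, hfin.mem_toFinset.2 ha, hax⟩

theorem AddSubmonoid.FG.exists_finset_nonempty_closure_eq {M : Type*} [AddMonoid M]
    {S : AddSubmonoid M} (hS : S.FG) : ∃ Ω : Finset M, Ω.Nonempty ∧ closure ↑Ω = S := by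
  classical
  obtain ⟨G, rfl⟩ := hS
  exact ⟨insert 0 G, Finset.insert_nonempty _ _, by rw [Finset.coe_insert, closure_insert_zero]⟩

theorem interior_setOf_forall_nonneg {ι E : Type*} [Finite ι] [AddCommGroup E]
    [TopologicalSpace E] [ContinuousAdd E] [Module ℝ E] [ContinuousSMul ℝ E]
    (ℓ : ι → E →L[ℝ] ℝ) :
    interior {x | ∀ i, 0 ≤ ℓ i x} = {x | ∀ i, ℓ i ≠ 0 → 0 < ℓ i x} := by
  have hcap : {x | ∀ i, 0 ≤ ℓ i x} = ⋂ i, ℓ i ⁻¹' Set.Ici 0 := by ext; simp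
  rw [hcap, interior_iInter_of_finite]
  ext x
  simp only [Set.mem_iInter, Set.mem_ofPred_eq]
  refine forall_congr' fun i => ?_
  by_cases hi : ℓ i = 0
  · simp [hi, Set.preimage]
  · rw [← ((ℓ i).isOpenMap_of_ne_zero hi).preimage_interior_eq_interior_preimage (ℓ i).continuous,
      interior_Ici]
    simp [hi]

theorem exists_intCast_mem_of_isOpen_of_smul_mem {ι : Type*} [Fintype ι] {U : Set (ι → ℝ)}
    (hU : IsOpen U) (hne : U.Nonempty) (hsmul : ∀ c : ℝ, 0 < c → ∀ x ∈ U, c • x ∈ U) :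
    ∃ v : ι → ℤ, (fun j => (v j : ℝ)) ∈ U := by
  obtain ⟨x, hx⟩ := hne
  obtain ⟨ε, hε, hball⟩ := Metric.isOpen_iff.1 hU x hx
  obtain ⟨N, hN⟩ := exists_nat_gt ε⁻¹
  have hN0 : (0 : ℝ) < N := (inv_pos.2 hε).trans hN
  have hNε : (N : ℝ)⁻¹ < ε := by rwa [inv_lt_comm₀ hN0 hε]
  refine ⟨fun j => round (N * x j), ?_⟩
  have hmem : (N : ℝ)⁻¹ • (fun j => (round (N * x j) : ℝ)) ∈ U := by
    refine hball ((Metric.mem_ball.2 <| (dist_pi_lt_iff hε).2 fun j => ?_))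
    have hdiff : (N : ℝ)⁻¹ * round (N * x j) - x j =
        -((N : ℝ)⁻¹ * (N * x j - round (N * x j))) := by
      field_simp; ring
    rw [Real.dist_eq, Pi.smul_apply, smul_eq_mul, hdiff, abs_neg, abs_mul,
      abs_of_pos (inv_pos.2 hN0)]
    calc (N : ℝ)⁻¹ * |N * x j - round (N * x j)| ≤ (N : ℝ)⁻¹ * (1 / 2) :=
          mul_le_mul_of_nonneg_left (abs_sub_round _) (inv_pos.2 hN0).le
      _ < ε := by linarith [inv_pos.2 hN0]
  simpa [smul_smul, hN0.ne'] using hsmul N hN0 _ hmem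

namespace Matrix

variable {ι κ : Type*} [Fintype ι] (A : Matrix κ ι ℤ)

theorem interior_setOf_forall_sum_intCast_mul_nonneg [Finite κ] :
    interior {x : ι → ℝ | ∀ i, 0 ≤ ∑ j, (A i j : ℝ) * x j} =
      {x | ∀ i, A i ≠ 0 → 0 < ∑ j, (A i j : ℝ) * x j} := by
  classical
  let ℓ : κ → (ι → ℝ) →L[ℝ] ℝ := fun i => ∑ j, (A i j : ℝ) • ContinuousLinearMap.proj j
  have hℓ : ∀ i x, ℓ i x = ∑ j, (A i j : ℝ) * x j := by simp [ℓ]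
  have hℓ0 : ∀ i, ℓ i = 0 ↔ A i = 0 := by
    intro i
    constructor
    · intro h
      funext j
      simpa [hℓ, Pi.single_apply] using congrArg (· (Pi.single j 1)) h
    · intro h
      ext x
      simp [hℓ, h]
  simpa only [hℓ, ne_eq, hℓ0] using interior_setOf_forall_nonneg ℓ

def nonnegLattice : AddSubmonoid (ι → ℤ) where
  carrier := {v | 0 ≤ A *ᵥ v}
  add_mem' {v w} hv hw := by simpa [mulVec_add] using add_nonneg hv hw
  zero_mem' := by simp

theorem mem_nonnegLattice {v : ι → ℤ} : v ∈ A.nonnegLattice ↔ 0 ≤ A *ᵥ v := Iff.rfl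

variable (κ) in
def posNegSub : (ι → ℕ) × (ι → ℕ) × (κ → ℕ) →+ (ι → ℤ) where
  toFun t j := t.1 j - t.2.1 j
  map_zero' := by ext; simp
  map_add' s t := by ext; simp; ring

def nonnegLatticeLift : AddSubmonoid ((ι → ℕ) × (ι → ℕ) × (κ → ℕ)) :=
  (A.mulVecLin.toAddMonoidHom.comp (posNegSub κ)).eqLocusM
    (((Nat.castAddMonoidHom ℤ).compLeft κ).comp
      ((AddMonoidHom.snd _ _).comp (AddMonoidHom.snd _ _)))

theorem mem_nonnegLatticeLift {t : (ι → ℕ) × (ι → ℕ) × (κ → ℕ)} :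
    t ∈ A.nonnegLatticeLift ↔ A *ᵥ posNegSub κ t = fun i => (t.2.2 i : ℤ) := Iff.rfl

theorem map_posNegSub_nonnegLatticeLift :
    A.nonnegLatticeLift.map (posNegSub κ) = A.nonnegLattice := by
  ext v
  constructor
  · rintro ⟨t, ht, rfl⟩
    rw [SetLike.mem_coe, mem_nonnegLatticeLift] at ht
    rw [mem_nonnegLattice, ht]
    exact fun i => Int.natCast_nonneg _
  · intro hv
    refine ⟨(fun j => (v j).toNat, fun j => (-v j).toNat, fun i => ((A *ᵥ v) i).toNat), ?_, ?_⟩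
    · have hpn : posNegSub κ (fun j => (v j).toNat, fun j => (-v j).toNat,
          fun i => ((A *ᵥ v) i).toNat) = v := by
        ext j
        simp [posNegSub]
      rw [SetLike.mem_coe, mem_nonnegLatticeLift, hpn]
      ext i
      simp [Int.toNat_of_nonneg (hv i)]
    · ext j
      simp [posNegSub]

theorem nonnegLattice_fg [Finite κ] : A.nonnegLattice.FG := by
  rw [← map_posNegSub_nonnegLatticeLift]
  exact (AddSubmonoid.fg_eqLocusM _ _).map _

theorem exists_finset_forall_sub_mem_nonnegLattice [Finite κ] (I : Set (ι → ℤ))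
    (hI : I ⊆ A.nonnegLattice) :
    ∃ Ω₀ : Finset (ι → ℤ), ↑Ω₀ ⊆ I ∧ ∀ v ∈ I, ∃ a ∈ Ω₀, v - a ∈ A.nonnegLattice := by
  classical
  obtain ⟨F, hFs, hF⟩ := Set.exists_finset_subset_forall_exists_le
    {t | t ∈ A.nonnegLatticeLift ∧ posNegSub κ t ∈ I}
  refine ⟨F.image (posNegSub κ), ?_, fun v hv => ?_⟩
  · rw [Finset.coe_image, Set.image_subset_iff]
    exact fun t ht => (hFs ht).2
  obtain ⟨t, ht, rfl⟩ : v ∈ A.nonnegLatticeLift.map (posNegSub κ) := by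
    rw [map_posNegSub_nonnegLatticeLift]
    exact hI hv
  obtain ⟨a, haF, hat⟩ := hF t ⟨ht, hv⟩
  obtain ⟨y, rfl⟩ := exists_add_of_le hat
  have hy : y ∈ A.nonnegLatticeLift := by
    have ha := (hFs haF).1
    rw [SetLike.mem_coe, mem_nonnegLatticeLift] at ht
    rw [mem_nonnegLatticeLift] at ha ⊢
    rw [map_add, mulVec_add, ha] at ht
    ext i
    simpa using congrFun ht i
  refine ⟨posNegSub κ a, Finset.mem_image_of_mem _ haF, ?_⟩
  rw [map_add, add_sub_cancel_left, ← map_posNegSub_nonnegLatticeLift]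
  exact AddSubmonoid.mem_map_of_mem _ hy

theorem exists_finsets_forall_eq_add_sum_nsmul [Finite κ] (I : Set (ι → ℤ))
    (hI : I ⊆ A.nonnegLattice) :
    ∃ Ω₀ Ω : Finset (ι → ℤ), ↑Ω₀ ⊆ I ∧ Ω.Nonempty ∧ ↑Ω ⊆ (A.nonnegLattice : Set (ι → ℤ)) ∧
      ∀ v ∈ I, ∃ a ∈ Ω₀, ∃ c : (ι → ℤ) → ℕ, v = a + ∑ b ∈ Ω, c b • b := by
  obtain ⟨Ω₀, hΩ₀I, hΩ₀⟩ := A.exists_finset_forall_sub_mem_nonnegLattice I hI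
  obtain ⟨Ω, hΩ, hΩS⟩ := A.nonnegLattice_fg.exists_finset_nonempty_closure_eq
  refine ⟨Ω₀, Ω, hΩ₀I, hΩ, hΩS ▸ AddSubmonoid.subset_closure, fun v hv => ?_⟩
  obtain ⟨a, ha, hva⟩ := hΩ₀ v hv
  rw [← hΩS, AddSubmonoid.mem_closure_finset] at hva
  obtain ⟨c, -, hc⟩ := hva
  exact ⟨a, ha, c, by rw [hc, add_sub_cancel]⟩

end Matrix

/-- For a rational polyhedral cone `P = {x : ℝ^m | A x ≥ 0}` with nonempty interior,
there are nonempty finite sets `Ω₀ ⊆ int(P) ∩ ℤ^m` and `Ω ⊆ P ∩ ℤ^m` such that the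
lattice points of `int(P)` are exactly the points `a + ∑_{b ∈ Ω} k_b • b` with
`a ∈ Ω₀` and `k_b ∈ ℤ≥0`. -/
theorem interior_lattice_points_of_rational_cone
    (m K : ℕ) (A : Matrix (Fin K) (Fin m) ℤ)
    (P : Set (Fin m → ℝ))
    (hP : P = {x : Fin m → ℝ | ∀ i : Fin K, 0 ≤ ∑ j : Fin m, (A i j : ℝ) * x j})
    (hint : (interior P).Nonempty) :
    ∃ (Ω₀ Ω : Finset (Fin m → ℤ)),
      Ω₀.Nonempty ∧ Ω.Nonempty ∧
      (∀ a ∈ Ω₀, (fun j => (a j : ℝ)) ∈ interior P) ∧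
      (∀ b ∈ Ω, (fun j => (b j : ℝ)) ∈ P) ∧
      (∀ v : Fin m → ℤ,
        (fun j => (v j : ℝ)) ∈ interior P ↔
          ∃ a ∈ Ω₀, ∃ c : (Fin m → ℤ) → ℕ, v = a + ∑ b ∈ Ω, c b • b) := by
  have hcast : ∀ (v : Fin m → ℤ) i, ∑ j, (A i j : ℝ) * v j = ((A *ᵥ v) i : ℝ) := by
    simp [mulVec, dotProduct]
  have hPℤ : ∀ v : Fin m → ℤ, (fun j => (v j : ℝ)) ∈ P ↔ v ∈ A.nonnegLattice := by
    simp [hP, hcast, mem_nonnegLattice, Pi.le_def]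
  have hint_eq := A.interior_setOf_forall_sum_intCast_mul_nonneg
  rw [← hP] at hint_eq
  have hintℤ : ∀ v : Fin m → ℤ,
      (fun j => (v j : ℝ)) ∈ interior P ↔ ∀ i, A i ≠ 0 → 0 < (A *ᵥ v) i := by
    simp [hint_eq, hcast]
  obtain ⟨Ω₀, Ω, hΩ₀, hΩ, hΩP, hrepr⟩ := A.exists_finsets_forall_eq_add_sum_nsmul
    {v | (fun j => (v j : ℝ)) ∈ interior P} fun v hv => (hPℤ v).1 (interior_subset hv)
  obtain ⟨v₀, hv₀⟩ : ∃ v : Fin m → ℤ, (fun j => (v j : ℝ)) ∈ interior P := by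
    refine exists_intCast_mem_of_isOpen_of_smul_mem isOpen_interior hint fun c hc x hx => ?_
    rw [hint_eq] at hx ⊢
    intro i hi
    simpa [Finset.mul_sum, mul_left_comm] using mul_pos hc (hx i hi)
  obtain ⟨a₀, ha₀, -⟩ := hrepr v₀ hv₀
  refine ⟨Ω₀, Ω, ⟨a₀, ha₀⟩, hΩ, hΩ₀, fun b hb => (hPℤ b).2 (hΩP hb), fun v => ⟨hrepr v, ?_⟩⟩
  rintro ⟨a, ha, c, rfl⟩
  have hsum : ∑ b ∈ Ω, c b • b ∈ A.nonnegLattice :=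
    sum_mem fun b hb => nsmul_mem (hΩP hb) _
  rw [hintℤ, mulVec_add]
  exact fun i hi => add_pos_of_pos_of_nonneg ((hintℤ a).1 (hΩ₀ ha) i hi) (hsum i)
end

section
/- Let P = {x ∈ R^m : Ax ≥ 0} be a rational cone with nonempty interior. Then the monoid P ∩ Z^m (under addition) is finitely generated. -/
open scoped BigOperators

/-!
Every lattice point `v` of the cone `{v | 0 ≤ A v}` is the image of a point `(A v, v⁺, v⁻)` of the
monoid `{(s, p, q) ∈ ℕ^K × ℕ^m × ℕ^m | s = A (p - q)}` under `(s, p, q) ↦ p - q`. That monoid is the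
kernel of an additive map out of `ℕ^K × ℕ^m × ℕ^m`, hence subtractive, hence finitely generated by
Dickson's lemma; so is its image.
-/

theorem AddMonoidHom.fg_mker {M G : Type*} [AddCommMonoid M] [PartialOrder M]
    [WellQuasiOrderedLE M] [IsOrderedCancelAddMonoid M] [CanonicallyOrderedAdd M]
    [AddZeroClass G] (φ : M →+ G) : (mker φ).FG :=
  AddSubmonoid.fg_of_subtractive fun x hx y hxy => by
    rw [mem_mker] at hx hxy ⊢
    rwa [map_add, hx, zero_add] at hxy

namespace Matrix

variable {ι κ : Type*} [Fintype ι]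

def coneLatticePoints (A : Matrix κ ι ℤ) : AddSubmonoid (ι → ℤ) where
  carrier := {v | 0 ≤ A *ᵥ v}
  add_mem' {v w} hv hw := by
    simpa only [Set.mem_ofPred_eq, mulVec_add] using add_nonneg hv hw
  zero_mem' := by simp

def slackResidual (A : Matrix κ ι ℤ) : (κ → ℕ) × (ι → ℕ) × (ι → ℕ) →+ (κ → ℤ) :=
  AddMonoidHom.mk' (fun w => ((↑) ∘ w.1 : κ → ℤ) - A *ᵥ ((↑) ∘ w.2.1 - (↑) ∘ w.2.2))
    fun w w' => by
      ext i
      simp only [Pi.add_apply, Prod.fst_add, Prod.snd_add, Pi.sub_apply, Function.comp_apply,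
        Nat.cast_add, mulVec, dotProduct, mul_sub, mul_add, Finset.sum_sub_distrib,
        Finset.sum_add_distrib]
      ring

def slackProjection : (κ → ℕ) × (ι → ℕ) × (ι → ℕ) →+ (ι → ℤ) :=
  AddMonoidHom.mk' (fun w => ((↑) ∘ w.2.1 : ι → ℤ) - (↑) ∘ w.2.2)
    fun w w' => by
      ext j
      simp only [Pi.add_apply, Prod.snd_add, Prod.fst_add, Pi.sub_apply, Function.comp_apply,
        Nat.cast_add]
      ring

theorem coneLatticePoints_eq_map_mker (A : Matrix κ ι ℤ) :
    A.coneLatticePoints = (AddMonoidHom.mker A.slackResidual).map (slackProjection (κ := κ)) := by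
  ext v
  constructor
  · intro hv
    have hsplit : ((↑) ∘ fun j => (v j).toNat) - (↑) ∘ (fun j => (-v j).toNat) = v :=
      funext fun j => Int.toNat_sub_toNat_neg (v j)
    refine ⟨(fun i => (A *ᵥ v) i |>.toNat, fun j => (v j).toNat, fun j => (-v j).toNat), ?_, hsplit⟩
    rw [SetLike.mem_coe, AddMonoidHom.mem_mker, slackResidual, AddMonoidHom.mk'_apply, hsplit,
      sub_eq_zero]
    exact funext fun i => Int.toNat_of_nonneg (hv i)
  · rintro ⟨w, hw, rfl⟩
    rw [SetLike.mem_coe, AddMonoidHom.mem_mker, slackResidual, AddMonoidHom.mk'_apply,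
      sub_eq_zero] at hw
    show 0 ≤ A *ᵥ (_ - _)
    rw [← hw]
    exact fun i => Int.natCast_nonneg _

theorem coneLatticePoints_fg [Finite κ] (A : Matrix κ ι ℤ) : A.coneLatticePoints.FG := by
  rw [coneLatticePoints_eq_map_mker]
  exact (AddMonoidHom.fg_mker _).map _

end Matrix

theorem rational_cone_lattice_monoid_fg_general
    (m K : ℕ) (A : Matrix (Fin K) (Fin m) ℤ) :
    ∃ Ω : Finset (Fin m → ℤ),
      (∀ b ∈ Ω, ∀ i : Fin K, 0 ≤ ∑ j : Fin m, A i j * b j) ∧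
      (∀ v : Fin m → ℤ, (∀ i : Fin K, 0 ≤ ∑ j : Fin m, A i j * v j) →
        ∃ c : (Fin m → ℤ) → ℕ, v = ∑ b ∈ Ω, c b • b) := by
  obtain ⟨Ω, hΩ⟩ := A.coneLatticePoints_fg
  refine ⟨Ω, fun b hb => ?_, fun v hv => ?_⟩
  · show b ∈ A.coneLatticePoints
    exact hΩ ▸ AddSubmonoid.subset_closure hb
  · replace hv : v ∈ AddSubmonoid.closure Ω := hΩ ▸ hv
    obtain ⟨c, -, hc⟩ := AddSubmonoid.mem_closure_finset.mp hv
    exact ⟨c, hc.symm⟩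

/-- Gordan's lemma: for a rational cone `P = {x : ℝ^m | A x ≥ 0}` with nonempty interior,
the additive monoid `P ∩ ℤ^m` is finitely generated: there is a finite set `Ω` of lattice
points of `P` such that every lattice point of `P` is a nonnegative integer combination of
elements of `Ω`. -/
theorem rational_cone_lattice_monoid_fg
    (m K : ℕ) (A : Matrix (Fin K) (Fin m) ℤ)
    (hint : (interior {x : Fin m → ℝ | ∀ i : Fin K, 0 ≤ ∑ j : Fin m, (A i j : ℝ) * x j}).Nonempty) :
    ∃ Ω : Finset (Fin m → ℤ),
      (∀ b ∈ Ω, ∀ i : Fin K, 0 ≤ ∑ j : Fin m, A i j * b j) ∧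
      (∀ v : Fin m → ℤ, (∀ i : Fin K, 0 ≤ ∑ j : Fin m, A i j * v j) →
        ∃ c : (Fin m → ℤ) → ℕ, v = ∑ b ∈ Ω, c b • b) :=
  rational_cone_lattice_monoid_fg_general m K A
end

section
/- Let n, p, q be positive integers with p < q ≤ 2p. For every integer i with 0 ≤ i ≤ n^q, there exist nonnegative integers a, b, c such that a·n^q + b·(n^q + 1) + c·(n^q + n^p + 1) = 2n^{p+q} + i. -/
/-- For positive integers `n, p, q` with `p < q ≤ 2p`, and every `i` with `0 ≤ i ≤ n^q`,
there are nonnegative integers `a, b, c` with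
`a·n^q + b·(n^q+1) + c·(n^q+n^p+1) = 2·n^{p+q} + i`. -/
theorem representation_case_p_lt_q_le_two_p
    (n p q : ℕ) (hn : 0 < n) (hp : 0 < p) (hq : 0 < q)
    (h1 : p < q) (h2 : q ≤ 2 * p) :
    ∀ i : ℕ, i ≤ n ^ q →
      ∃ a b c : ℕ, a * n ^ q + b * (n ^ q + 1) + c * (n ^ q + n ^ p + 1)
        = 2 * n ^ (p + q) + i := by
  intro i hi
  set A := n ^ p with hA
  set B := n ^ q with hB
  have hm : 0 < A + 1 := Nat.succ_pos _
  set b := i % (A + 1) with hbdef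
  set c := i / (A + 1) with hcdef
  have hb : b ≤ A := Nat.lt_succ_iff.mp (Nat.mod_lt _ hm)
  have hcle : c ≤ n ^ (q - p) := by
    have : i < (n ^ (q - p) + 1) * (A + 1) := by
      have hBle : B ≤ n ^ (q - p) * A := by
        rw [hA, hB, ← pow_add]
        have : q - p + p = q := Nat.sub_add_cancel h1.le
        rw [this]
      calc i ≤ B := hi
        _ < (n ^ (q - p) + 1) * (A + 1) := by nlinarith [Nat.one_le_iff_ne_zero.mpr (pow_ne_zero (q-p) hn.ne')]
    exact Nat.lt_succ_iff.mp ((Nat.div_lt_iff_lt_mul hm).mpr this)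
  have hqpA : n ^ (q - p) ≤ A := by
    rw [hA]
    exact Nat.pow_le_pow_right hn (by omega)
  have hbc : b + c ≤ 2 * A := by omega
  have hkey : b + c * (A + 1) = i := by
    rw [hbdef, hcdef]
    exact Nat.mod_add_div' i (A + 1)
  refine ⟨2 * A - (b + c), b, c, ?_⟩
  obtain ⟨a, ha⟩ : ∃ a, 2 * A - (b + c) = a ∧ a + (b + c) = 2 * A := ⟨2 * A - (b + c), rfl, by omega⟩
  rw [ha.1]
  have hpq : n ^ (p + q) = A * B := by rw [hA, hB, ← pow_add]
  calc a * B + b * (B + 1) + c * (B + A + 1)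
      = (a + (b + c)) * B + (b + c * (A + 1)) := by ring
    _ = 2 * A * B + i := by rw [ha.2, hkey]
    _ = 2 * n ^ (p + q) + i := by rw [hpq]; ring
end

section
/- Let n, p, q be positive integers with 2p ≤ q. For every integer i with 0 ≤ i ≤ n^q, there exist nonnegative integers a, b, c such that a·n^q + b·(n^q + 1) + c·(n^q + n^p + 1) = 2n^{2q−p} + i. -/
/-- For positive integers `n, p, q` with `2p ≤ q`, and every `i` with `0 ≤ i ≤ n^q`,
there are nonnegative integers `a, b, c` with
`a·n^q + b·(n^q+1) + c·(n^q+n^p+1) = 2·n^{2q−p} + i`. -/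
theorem representation_case_two_p_le_q
    (n p q : ℕ) (hn : 0 < n) (hp : 0 < p) (hq : 0 < q)
    (h1 : 2 * p ≤ q) :
    ∀ i : ℕ, i ≤ n ^ q →
      ∃ a b c : ℕ, a * n ^ q + b * (n ^ q + 1) + c * (n ^ q + n ^ p + 1)
        = 2 * n ^ (2 * q - p) + i := by
  intro i hi
  set m := n ^ p + 1 with hm
  refine ⟨2 * n ^ (q - p) - i % m - i / m, i % m, i / m, ?_⟩
  have hb : i % m ≤ n ^ p := by
    have := Nat.mod_lt i (show 0 < m by omega); omega
  have hc : i / m ≤ n ^ (q - p) := by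
    calc i / m ≤ n ^ q / n ^ p :=
          Nat.div_le_div hi (Nat.le_add_right _ _) (by positivity)
      _ = n ^ (q - p) := Nat.pow_div (by omega) hn
  have hpp : n ^ p ≤ n ^ (q - p) := Nat.pow_le_pow_right hn (by omega)
  have hbc : i % m + i / m ≤ 2 * n ^ (q - p) := by omega
  have key : i % m + i / m * m = i := by
    rw [Nat.mul_comm]; exact Nat.mod_add_div i m
  have habc : (2 * n ^ (q - p) - i % m - i / m) + i % m + i / m = 2 * n ^ (q - p) := by
    omega
  have hpow : n ^ (q - p) * n ^ q = n ^ (2 * q - p) := by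
    rw [← pow_add]; congr 1; omega
  have expand : (2 * n ^ (q - p) - i % m - i / m) * n ^ q + i % m * (n ^ q + 1)
      + i / m * (n ^ q + n ^ p + 1)
      = ((2 * n ^ (q - p) - i % m - i / m) + i % m + i / m) * n ^ q
        + (i % m + i / m * (n ^ p + 1)) := by ring
  rw [expand, habc, ← hm, key, Nat.mul_assoc, hpow]
end

section
/- Let k ≥ 1 and consider a directed graph admitting, at a fixed vertex v₀, cycles of lengths L, L+1, and L+M+1 (with L = n^q, M = n^p, for positive integers n, p, q). If q < p < 2q, then for every integer i with 0 ≤ i ≤ n^q there is a directed closed walk based at v₀ of length exactly 2n^{2q} + i obtained by concatenating copies of the three cycles; similarly with target length 2n^{p+q} + i when p < q ≤ 2p, and 2n^{2q−p} + i when 2p ≤ q. -/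
/-- A closed walk of length `T` based at `v₀` in the digraph `(V, adj)`. -/
def HasClosedWalk {V : Type*} (adj : V → V → Prop) (v₀ : V) (T : ℕ) : Prop :=
  ∃ f : ℕ → V, f 0 = v₀ ∧ f T = v₀ ∧ ∀ i < T, adj (f i) (f (i + 1))

lemma HasClosedWalk.zero {V : Type*} (adj : V → V → Prop) (v₀ : V) :
    HasClosedWalk adj v₀ 0 :=
  ⟨fun _ => v₀, rfl, rfl, fun i hi => absurd hi (Nat.not_lt_zero i)⟩

lemma HasClosedWalk.add {V : Type*} {adj : V → V → Prop} {v₀ : V} {T₁ T₂ : ℕ}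
    (h1 : HasClosedWalk adj v₀ T₁) (h2 : HasClosedWalk adj v₀ T₂) :
    HasClosedWalk adj v₀ (T₁ + T₂) := by
  obtain ⟨f, hf0, hfT, hf⟩ := h1
  obtain ⟨g, hg0, hgT, hg⟩ := h2
  refine ⟨fun i => if i < T₁ then f i else g (i - T₁), ?_, ?_, ?_⟩
  · by_cases h : 0 < T₁ <;> simp [h, hf0, hg0]
  · have h : ¬ (T₁ + T₂ < T₁) := by omega
    simp only [h, if_false]
    simpa using hgT
  · intro i hi
    by_cases h : i < T₁
    · simp only [h, if_true]
      by_cases h' : i + 1 < T₁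
      · simpa [h'] using hf i h
      · have he : i + 1 = T₁ := by omega
        have : ¬ (i + 1 < T₁) := by omega
        simp only [this, if_false]
        have : g (i + 1 - T₁) = f (i + 1) := by
          rw [he]; simp [hg0, hfT]
        rw [this]
        exact hf i h
    · have h' : ¬ (i + 1 < T₁) := by omega
      simp only [h, h', if_false]
      have hlt : i - T₁ < T₂ := by omega
      have := hg (i - T₁) hlt
      have he : i + 1 - T₁ = (i - T₁) + 1 := by omega
      rw [he]
      exact this

lemma HasClosedWalk.mul {V : Type*} {adj : V → V → Prop} {v₀ : V} {T : ℕ}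
    (h : HasClosedWalk adj v₀ T) (k : ℕ) : HasClosedWalk adj v₀ (k * T) := by
  induction k with
  | zero => simpa using HasClosedWalk.zero adj v₀
  | succ m ih =>
      have := ih.add h
      simpa [Nat.succ_mul] using this

lemma HasClosedWalk.combo {V : Type*} {adj : V → V → Prop} {v₀ : V} {T₁ T₂ T₃ : ℕ}
    (h1 : HasClosedWalk adj v₀ T₁) (h2 : HasClosedWalk adj v₀ T₂)
    (h3 : HasClosedWalk adj v₀ T₃) (a b c : ℕ) :
    HasClosedWalk adj v₀ (a * T₁ + b * T₂ + c * T₃) :=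
  ((h1.mul a).add (h2.mul b)).add (h3.mul c)

/-- Suppose a digraph admits, at a fixed vertex `v₀`, directed cycles of lengths
`L = n^q`, `L+1`, and `L+M+1` with `M = n^p` (`n, p, q` positive integers).  Then:
if `q < p < 2q`, for every `0 ≤ i ≤ n^q` there is a closed walk based at `v₀` of
length exactly `2n^{2q} + i`; if `p < q ≤ 2p`, of length `2n^{p+q} + i`; and if
`2p ≤ q`, of length `2n^{2q−p} + i`. -/
theorem closed_walks_from_three_cycles
    {V : Type*} (adj : V → V → Prop) (v₀ : V)
    (n p q : ℕ) (hn : 0 < n) (hp : 0 < p) (hq : 0 < q)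
    (hc1 : HasClosedWalk adj v₀ (n ^ q))
    (hc2 : HasClosedWalk adj v₀ (n ^ q + 1))
    (hc3 : HasClosedWalk adj v₀ (n ^ q + n ^ p + 1)) :
    (q < p → p < 2 * q → ∀ i ≤ n ^ q, HasClosedWalk adj v₀ (2 * n ^ (2 * q) + i)) ∧
    (p < q → q ≤ 2 * p → ∀ i ≤ n ^ q, HasClosedWalk adj v₀ (2 * n ^ (p + q) + i)) ∧
    (2 * p ≤ q → ∀ i ≤ n ^ q, HasClosedWalk adj v₀ (2 * n ^ (2 * q - p) + i)) := by
  set N := n ^ q with hN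
  set M := n ^ p with hM
  refine ⟨?_, ?_, ?_⟩
  · -- regime 1 : only needs cycles of length N and N+1
    intro _ _ i hi
    have key : (2 * N - i) * N + i * (N + 1) + 0 * (N + M + 1)
        = 2 * n ^ (2 * q) + i := by
      have h2 : n ^ (2 * q) = N * N := by rw [hN, two_mul, pow_add]
      have ha : (2 * N - i) + i = 2 * N := by omega
      calc (2 * N - i) * N + i * (N + 1) + 0 * (N + M + 1)
          = ((2 * N - i) + i) * N + i := by ring
        _ = 2 * N * N + i := by rw [ha]
        _ = 2 * n ^ (2 * q) + i := by rw [h2]; ring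
    rw [← key]
    exact hc1.combo hc2 hc3 _ _ _
  · -- regime 2 : p < q ≤ 2p
    intro hpq hq2p i hi
    set c := i / (M + 1) with hc
    set b := i % (M + 1) with hb
    have hbc : b + c * (M + 1) = i := by rw [hb, hc, Nat.mul_comm]; exact Nat.mod_add_div i (M + 1)
    have hbM : b ≤ M := by
      have := Nat.mod_lt i (show 0 < M + 1 by omega)
      omega
    have hcM : c ≤ M := by
      have h1 : c * (M + 1) ≤ N := by omega
      have h2 : N ≤ M * (M + 1) := by
        calc N = n ^ q := hN
          _ ≤ n ^ (2 * p) := Nat.pow_le_pow_right hn hq2p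
          _ = M * M := by rw [hM, two_mul, pow_add]
          _ ≤ M * (M + 1) := Nat.mul_le_mul_left M (by omega)
      exact Nat.le_of_mul_le_mul_right (le_trans h1 h2) (by omega)
    have habc : (b + c) ≤ 2 * M := by omega
    have key : (2 * M - (b + c)) * N + b * (N + 1) + c * (N + M + 1)
        = 2 * n ^ (p + q) + i := by
      have h2 : n ^ (p + q) = M * N := by rw [hN, hM, pow_add]
      have ha : (2 * M - (b + c)) + (b + c) = 2 * M := by omega
      calc (2 * M - (b + c)) * N + b * (N + 1) + c * (N + M + 1)
          = ((2 * M - (b + c)) + (b + c)) * N + (b + c * (M + 1)) := by ring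
        _ = 2 * M * N + i := by rw [ha, hbc]
        _ = 2 * n ^ (p + q) + i := by rw [h2]; ring
    rw [← key]
    exact hc1.combo hc2 hc3 _ _ _
  · -- regime 3 : 2p ≤ q
    intro h2pq i hi
    set c := i / (M + 1) with hc
    set b := i % (M + 1) with hb
    have hbc : b + c * (M + 1) = i := by rw [hb, hc, Nat.mul_comm]; exact Nat.mod_add_div i (M + 1)
    have hbM : b ≤ M := by
      have := Nat.mod_lt i (show 0 < M + 1 by omega)
      omega
    set K := n ^ (q - p) with hK
    have hMK : M ≤ K := by
      rw [hM, hK]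
      exact Nat.pow_le_pow_right hn (by omega)
    have hcK : c ≤ K := by
      have h1 : c * (M + 1) ≤ N := by omega
      have h2 : N ≤ K * (M + 1) := by
        calc N = n ^ q := hN
          _ = n ^ ((q - p) + p) := by congr 1; omega
          _ = K * M := by rw [hK, hM, pow_add]
          _ ≤ K * (M + 1) := Nat.mul_le_mul_left K (by omega)
      exact Nat.le_of_mul_le_mul_right (le_trans h1 h2) (by omega)
    have habc : (b + c) ≤ 2 * K := by omega
    have key : (2 * K - (b + c)) * N + b * (N + 1) + c * (N + M + 1)
        = 2 * n ^ (2 * q - p) + i := by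
      have h2 : n ^ (2 * q - p) = K * N := by
        rw [hN, hK, ← pow_add]
        congr 1
        omega
      have ha : (2 * K - (b + c)) + (b + c) = 2 * K := by omega
      calc (2 * K - (b + c)) * N + b * (N + 1) + c * (N + M + 1)
          = ((2 * K - (b + c)) + (b + c)) * N + (b + c * (M + 1)) := by ring
        _ = 2 * K * N + i := by rw [ha, hbc]
        _ = 2 * n ^ (2 * q - p) + i := by rw [h2]; ring
    rw [← key]
    exact hc1.combo hc2 hc3 _ _ _
end
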